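/- arXiv:0803.4454 — 6 statements merged into one kernel-verified Lean document; each statement's English description precedes it below -/
import Mathlib

section
/- Let p be an odd prime. Then the projective special linear group PSL(2, 𝔽_p) contains a metacyclic subgroup which is a semidirect product ℤ/p ⋊ ℤ/((p-1)/2) with a faithful action: there exist an injective group homomorphism φ from the cyclic group ℤ/((p-1)/2) into the automorphism group of the additive group ℤ/p, and an injective group homomorphism from the semidirect product (ℤ/p) ⋊_φ (ℤ/((p-1)/2)) into PSL(2, 𝔽_p). -/
/-- The projective special linear group `PSL(n, F)`: the quotient of `SL(n, F)` by its center. -/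
abbrev PSL (n : ℕ) (F : Type) [Field F] :=
  Matrix.SpecialLinearGroup (Fin n) F ⧸ Subgroup.center (Matrix.SpecialLinearGroup (Fin n) F)

/-!
In `SL(2, R)`, conjugating `[[1, b], [0, 1]]` by `diag(u, u⁻¹)` gives `[[1, u²b], [0, 1]]`, and
`[[1, b], [0, 1]] · diag(u, u⁻¹)` is central only when `b = 0` and `u² = 1`. For a generator `g`
of `𝔽_pˣ`, of order `p - 1 = 2q`, the class of `diag(g, g⁻¹)` in `PSL(2, 𝔽_p)` therefore has
order `q` and acts on the unipotent subgroup `ℤ/p` through multiplication by `g²`, which also has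
order `q`; together they generate a copy of `ℤ/p ⋊ ℤ/q` with faithful action.
-/

open Matrix
open scoped MatrixGroups

section ZModPow

variable {G : Type*} [Group G] {n : ℕ}

def zmodPowHom (g : G) (hg : g ^ n = 1) : Multiplicative (ZMod n) →* G :=
  AddMonoidHom.toMultiplicativeLeft <|
    ZMod.lift n ⟨zmultiplesHom (Additive G) (Additive.ofMul g), by
      rw [zmultiplesHom_apply, natCast_zsmul, ← ofMul_pow, hg, ofMul_one]⟩

lemma exists_ofAdd_intCast_eq (x : Multiplicative (ZMod n)) :
    ∃ k : ℤ, Multiplicative.ofAdd (k : ZMod n) = x :=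
  ZMod.intCast_surjective x

lemma zmodPowHom_ofAdd_intCast (g : G) (hg : g ^ n = 1) (k : ℤ) :
    zmodPowHom g hg (Multiplicative.ofAdd (k : ZMod n)) = g ^ k := by
  simp [zmodPowHom]

lemma intCast_zmod_eq_zero_of_sq_zpow_eq_one {g : G} (hg : orderOf g = 2 * n) {k : ℤ}
    (h : (g ^ k) ^ 2 = 1) : (k : ZMod n) = 0 := by
  rw [← zpow_natCast, ← _root_.zpow_mul, ← orderOf_dvd_iff_zpow_eq_one, hg] at h
  push_cast at h
  rw [mul_comm k] at h
  rw [ZMod.intCast_zmod_eq_zero_iff_dvd]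
  exact (mul_dvd_mul_iff_left two_ne_zero).mp h

end ZModPow

namespace Matrix.SpecialLinearGroup

variable {R : Type*} [CommRing R]

def upperUnipotent : Multiplicative R →* SL(2, R) where
  toFun b := ⟨!![1, b.toAdd; 0, 1], by simp [det_fin_two_of]⟩
  map_one' := Subtype.ext <| by simp [one_fin_two]
  map_mul' a b := Subtype.ext <| by change _ = _ * _; simp [add_comm]

def diagUnits : Rˣ →* SL(2, R) where
  toFun u := ⟨!![(u : R), 0; 0, ((u⁻¹ : Rˣ) : R)], by simp [det_fin_two_of]⟩
  map_one' := Subtype.ext <| by simp [one_fin_two]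
  map_mul' a b := Subtype.ext <| by change _ = _ * _; simp [mul_comm]

lemma coe_upperUnipotent (b : R) :
    (upperUnipotent (.ofAdd b) : Matrix (Fin 2) (Fin 2) R) = !![1, b; 0, 1] := rfl

lemma coe_diagUnits (u : Rˣ) :
    (diagUnits u : Matrix (Fin 2) (Fin 2) R) = !![(u : R), 0; 0, ((u⁻¹ : Rˣ) : R)] := rfl

lemma diagUnits_mul_upperUnipotent_mul_inv (u : Rˣ) (b : R) :
    diagUnits u * upperUnipotent (.ofAdd b) * (diagUnits u)⁻¹ =
      upperUnipotent (.ofAdd ((u : R) ^ 2 * b)) := by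
  rw [← map_inv]
  ext i j
  fin_cases i <;> fin_cases j <;> simp [coe_upperUnipotent, coe_diagUnits]
  ring

lemma upperUnipotent_mul_diagUnits_mem_center_iff (b : R) (u : Rˣ) :
    upperUnipotent (.ofAdd b) * diagUnits u ∈ Subgroup.center SL(2, R) ↔ b = 0 ∧ u ^ 2 = 1 := by
  have hprod : ((upperUnipotent (.ofAdd b) * diagUnits u : SL(2, R)) : Matrix (Fin 2) (Fin 2) R) =
      !![(u : R), b * ((u⁻¹ : Rˣ) : R); 0, ((u⁻¹ : Rˣ) : R)] := by
    simp [coe_upperUnipotent, coe_diagUnits]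
  rw [mem_center_iff, hprod, Fintype.card_fin]
  constructor
  · rintro ⟨r, hr, hA⟩
    have h00 := congr_fun₂ hA 0 0
    have h01 := congr_fun₂ hA 0 1
    simp only [scalar_apply, diagonal_apply, of_apply, cons_val', cons_val_zero, cons_val_one,
      empty_val', cons_val_fin_one, ↓reduceIte] at h00 h01
    refine ⟨(Units.mul_left_eq_zero _).mp h01.symm, Units.ext ?_⟩
    rw [Units.val_pow_eq_pow_val, ← h00, hr, Units.val_one]
  · rintro ⟨rfl, hu⟩
    refine ⟨u, by rw [← Units.val_pow_eq_pow_val, hu, Units.val_one], ?_⟩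
    have : u⁻¹ = u := inv_eq_of_mul_eq_one_right (by rw [← sq, hu])
    ext i j
    fin_cases i <;> fin_cases j <;> simp [this]

end Matrix.SpecialLinearGroup

section Metacyclic

open Matrix.SpecialLinearGroup

variable {R : Type*} [CommRing R] {q : ℕ} {g : Rˣ}

def squarePowAction (hg : orderOf g = 2 * q) :
    Multiplicative (ZMod q) →* MulAut (Multiplicative R) :=
  (MulAutMultiplicative R).symm.toMonoidHom.comp <| AddAut.mulLeft.comp <|
    zmodPowHom (g ^ 2) (by rw [← pow_mul, ← hg, pow_orderOf_eq_one])

lemma squarePowAction_ofAdd_intCast (hg : orderOf g = 2 * q) (k : ℤ) (b : R) :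
    squarePowAction hg (.ofAdd k) (.ofAdd b) = .ofAdd ((((g ^ k) ^ 2 : Rˣ) : R) * b) := by
  have hcomm : (g ^ 2) ^ k = (g ^ k) ^ 2 := by
    rw [← zpow_natCast, ← _root_.zpow_mul, mul_comm, _root_.zpow_mul, zpow_natCast]
  simp only [squarePowAction, MonoidHom.comp_apply, zmodPowHom_ofAdd_intCast, hcomm]
  rfl

lemma squarePowAction_injective (hg : orderOf g = 2 * q) :
    Function.Injective (squarePowAction (R := R) hg) := by
  rw [injective_iff_map_eq_one]
  intro x hx
  obtain ⟨k, rfl⟩ := exists_ofAdd_intCast_eq x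
  have h := DFunLike.congr_fun hx (.ofAdd 1)
  rw [squarePowAction_ofAdd_intCast, mul_one, MulAut.one_apply] at h
  rw [intCast_zmod_eq_zero_of_sq_zpow_eq_one hg (Units.ext (Multiplicative.ofAdd.injective h))]
  rfl

lemma mk_diagUnits_pow_eq_one (hg : orderOf g = 2 * q) :
    QuotientGroup.mk' (Subgroup.center SL(2, R)) (diagUnits g) ^ q = 1 := by
  rw [← map_pow, ← map_pow, QuotientGroup.mk'_apply, QuotientGroup.eq_one_iff]
  simpa using (upperUnipotent_mul_diagUnits_mem_center_iff 0 (g ^ q)).mpr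
    ⟨rfl, by rw [← pow_mul, mul_comm, ← hg, pow_orderOf_eq_one]⟩

def metacyclicHom (hg : orderOf g = 2 * q) :
    Multiplicative R ⋊[squarePowAction hg] Multiplicative (ZMod q) →*
      SL(2, R) ⧸ Subgroup.center SL(2, R) :=
  SemidirectProduct.lift ((QuotientGroup.mk' _).comp upperUnipotent)
    (zmodPowHom _ (mk_diagUnits_pow_eq_one hg)) fun n ↦ by
      obtain ⟨k, rfl⟩ := exists_ofAdd_intCast_eq n
      refine MonoidHom.ext fun b ↦ ?_
      obtain ⟨b, rfl⟩ := Multiplicative.ofAdd.surjective b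
      simp only [MonoidHom.comp_apply, MulEquiv.coe_toMonoidHom, MulAut.conj_apply,
        zmodPowHom_ofAdd_intCast, squarePowAction_ofAdd_intCast]
      rw [← map_zpow, ← map_zpow, ← map_inv, ← map_mul, ← map_mul,
        diagUnits_mul_upperUnipotent_mul_inv, Units.val_pow_eq_pow_val]

lemma metacyclicHom_ofAdd (hg : orderOf g = 2 * q) (b : R) (k : ℤ) :
    metacyclicHom hg ⟨.ofAdd b, .ofAdd (k : ZMod q)⟩ =
      QuotientGroup.mk' _ (upperUnipotent (.ofAdd b) * diagUnits (g ^ k)) := by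
  change QuotientGroup.mk' (Subgroup.center SL(2, R)) _ * zmodPowHom _ _ (.ofAdd (k : ZMod q)) = _
  rw [zmodPowHom_ofAdd_intCast, ← map_zpow, ← map_zpow, map_mul]

lemma metacyclicHom_injective (hg : orderOf g = 2 * q) : Function.Injective (metacyclicHom hg) := by
  rw [injective_iff_map_eq_one]
  rintro ⟨b, n⟩ hx
  obtain ⟨b, rfl⟩ := Multiplicative.ofAdd.surjective b
  obtain ⟨k, rfl⟩ := exists_ofAdd_intCast_eq n
  rw [metacyclicHom_ofAdd, QuotientGroup.mk'_apply, QuotientGroup.eq_one_iff,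
    upperUnipotent_mul_diagUnits_mem_center_iff] at hx
  obtain ⟨rfl, hk⟩ := hx
  rw [intCast_zmod_eq_zero_of_sq_zpow_eq_one hg hk]
  rfl

end Metacyclic

/-- For an odd prime `p`, the group `PSL(2, 𝔽_p)` contains a metacyclic subgroup which is a
semidirect product `ℤ/p ⋊ ℤ/((p-1)/2)` with a faithful action. -/
theorem psl_two_contains_metacyclic (p : ℕ) [Fact p.Prime] (hp : Odd p) :
    ∃ (φ : Multiplicative (ZMod ((p - 1) / 2)) →* MulAut (Multiplicative (ZMod p)))
      (ψ : (Multiplicative (ZMod p)) ⋊[φ] (Multiplicative (ZMod ((p - 1) / 2))) →*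
        PSL 2 (ZMod p)),
      Function.Injective φ ∧ Function.Injective ψ := by
  obtain ⟨g, hgen⟩ := IsCyclic.exists_generator (α := (ZMod p)ˣ)
  have hg : orderOf g = 2 * ((p - 1) / 2) := by
    rw [orderOf_eq_card_of_forall_mem_zpowers hgen, Nat.card_eq_fintype_card, ZMod.card_units]
    have := Nat.odd_iff.mp hp
    omega
  exact ⟨squarePowAction hg, metacyclicHom hg, squarePowAction_injective hg,
    metacyclicHom_injective hg⟩
end

section
/- Let F be a field and let r, m be positive integers with r < m. Then there is an injective group homomorphism from the special linear group SL(r, F) into the projective special linear group PSL(m, F); in particular SL(r, F) is isomorphic to a subgroup of PSL(m, F). -/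
theorem QuotientGroup.mk'_comp_injective {G H : Type*} [Group G] [Group H] {N : Subgroup H}
    [N.Normal] {f : G →* H} (hf : ∀ g, f g ∈ N → g = 1) :
    Function.Injective ((QuotientGroup.mk' N).comp f) :=
  (injective_iff_map_eq_one _).2 fun g hg => hf g ((QuotientGroup.eq_one_iff _).1 hg)

namespace Matrix.SpecialLinearGroup

variable {n p R : Type*} [Fintype n] [DecidableEq n] [Fintype p] [DecidableEq p] [CommRing R]

def reindex (e : n ≃ p) : SpecialLinearGroup n R ≃* SpecialLinearGroup p R where
  toFun A := ⟨Matrix.reindex e e A, by simp⟩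
  invFun A := ⟨Matrix.reindex e.symm e.symm A, by simp⟩
  left_inv A := Subtype.ext <| by simp
  right_inv A := Subtype.ext <| by simp
  map_mul' A B := Subtype.ext (submatrix_mul_equiv A.1 B.1 e.symm e.symm e.symm).symm

def extendByOne : SpecialLinearGroup n R →* SpecialLinearGroup (n ⊕ p) R where
  toFun A := ⟨fromBlocks A 0 0 1, by simp⟩
  map_one' := Subtype.ext fromBlocks_one
  map_mul' A B := Subtype.ext <|
    show fromBlocks (A.1 * B.1) 0 0 1 = fromBlocks A.1 0 0 1 * fromBlocks B.1 0 0 1 by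
      simp [fromBlocks_multiply]

@[simp]
theorem coe_extendByOne (A : SpecialLinearGroup n R) :
    (extendByOne (p := p) A : Matrix (n ⊕ p) (n ⊕ p) R) = fromBlocks A 0 0 1 :=
  rfl

theorem extendByOne_mem_center_iff [Nonempty p] {A : SpecialLinearGroup n R} :
    extendByOne (p := p) A ∈ Subgroup.center (SpecialLinearGroup (n ⊕ p) R) ↔ A = 1 := by
  refine ⟨fun h => ?_, fun h => by rw [h, map_one]; exact Subgroup.one_mem _⟩
  obtain ⟨s, -, hs⟩ := mem_center_iff.mp h
  obtain ⟨k⟩ := ‹Nonempty p›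
  have hs1 : s = 1 := by simpa using congr_fun₂ hs (.inr k) (.inr k)
  rw [hs1, map_one, ← fromBlocks_one] at hs
  exact Subtype.ext (fromBlocks_inj.mp hs).1.symm

end Matrix.SpecialLinearGroup

theorem sl_embeds_in_psl_general (F : Type) [Field F] (r m : ℕ)
    (hrm : r < m) :
    ∃ ψ : Matrix.SpecialLinearGroup (Fin r) F →* PSL m F, Function.Injective ψ := by
  have : Nonempty (Fin (m - r)) := ⟨⟨0, by omega⟩⟩
  let e : Fin r ⊕ Fin (m - r) ≃ Fin m := finSumFinEquiv.trans (finCongr (by omega))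
  let ι := Matrix.SpecialLinearGroup.reindex (R := F) e
  refine ⟨(QuotientGroup.mk' _).comp (ι.toMonoidHom.comp Matrix.SpecialLinearGroup.extendByOne),
    QuotientGroup.mk'_comp_injective fun A hA => ?_⟩
  exact Matrix.SpecialLinearGroup.extendByOne_mem_center_iff.mp
    ((MulEquivClass.apply_mem_center_iff ι).mp hA)

/-- For `r < m`, the special linear group `SL(r, F)` embeds into the projective special linear
group `PSL(m, F)`; in particular `SL(r, F)` is isomorphic to a subgroup of `PSL(m, F)`. -/
theorem sl_embeds_in_psl (F : Type) [Field F] (r m : ℕ) (hr : 0 < r) (hm : 0 < m)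
    (hrm : r < m) :
    ∃ ψ : Matrix.SpecialLinearGroup (Fin r) F →* PSL m F, Function.Injective ψ :=
  sl_embeds_in_psl_general F r m hrm
end

section
/- The group PSL(3, 𝔽_5) contains a metacyclic subgroup isomorphic to a semidirect product ℤ/31 ⋊ ℤ/3 with faithful action: there exist an injective group homomorphism φ from ℤ/3 into the automorphism group of ℤ/31, and an injective group homomorphism from the semidirect product (ℤ/31) ⋊_φ (ℤ/3) into PSL(3, 𝔽_5). -/
instance : Fact (Nat.Prime 5) := ⟨by norm_num⟩

open Multiplicative

section zmodPowersHom

variable {G : Type*} [Group G] {n : ℕ}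

def zmodPowersHom (a : G) (ha : a ^ n = 1) : Multiplicative (ZMod n) →* G :=
  AddMonoidHom.toMultiplicativeLeft
    (ZMod.lift n ⟨zmultiplesHom (Additive G) (Additive.ofMul a), by simp [← ofMul_pow, ha]⟩)

theorem zmodPowersHom_ofAdd_intCast (a : G) (ha : a ^ n = 1) (k : ℤ) :
    zmodPowersHom a ha (ofAdd (k : ZMod n)) = a ^ k := by
  simp [zmodPowersHom]

theorem zmodPowersHom_ofAdd_natCast (a : G) (ha : a ^ n = 1) (k : ℕ) :
    zmodPowersHom a ha (ofAdd (k : ZMod n)) = a ^ k := by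
  simpa using zmodPowersHom_ofAdd_intCast a ha k

theorem zmodPowersHom_ofAdd_one (a : G) (ha : a ^ n = 1) : zmodPowersHom a ha (ofAdd 1) = a := by
  simpa using zmodPowersHom_ofAdd_natCast a ha 1

theorem zmodPowersHom_injective {a : G} (ha : a ^ n = 1) (h : orderOf a = n) :
    Function.Injective (zmodPowersHom a ha) := by
  refine (injective_iff_map_eq_one _).2 fun x hx => ?_
  rw [← ofAdd_toAdd x, ← ZMod.intCast_zmod_cast (toAdd x), zmodPowersHom_ofAdd_intCast,
    ← orderOf_dvd_iff_zpow_eq_one, h, ← ZMod.intCast_zmod_eq_zero_iff_dvd] at hx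
  rw [← ofAdd_toAdd x, ← ZMod.intCast_zmod_cast (toAdd x), hx, ofAdd_zero]

theorem natCard_range_zmodPowersHom [NeZero n] {a : G} (ha : a ^ n = 1) (h : orderOf a = n) :
    Nat.card (zmodPowersHom a ha).range = n := by
  rw [← Nat.card_congr (MonoidHom.ofInjective (zmodPowersHom_injective ha h)).toEquiv]
  simp

theorem MonoidHom.ext_multiplicative_zmod {f g : Multiplicative (ZMod n) →* G}
    (h : f (ofAdd 1) = g (ofAdd 1)) : f = g := by
  refine MonoidHom.ext fun x => ?_
  rw [← ofAdd_toAdd x, ← ZMod.intCast_zmod_cast (toAdd x), ← zsmul_one, ofAdd_zsmul,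
    map_zpow, map_zpow, h]

end zmodPowersHom

section SemidirectProduct

variable {N G H : Type*} [Group N] [Group G] [Group H]

theorem MulAut.comp_pow_eq_pow_comp {f : N →* G} {σ : MulAut N} {τ : MulAut G}
    (h : f.comp σ.toMonoidHom = τ.toMonoidHom.comp f) (k : ℕ) :
    f.comp (σ ^ k).toMonoidHom = (τ ^ k).toMonoidHom.comp f := by
  induction k with
  | zero => rfl
  | succ k ih =>
    ext x
    simpa [pow_succ, MulAut.mul_apply] using
      (DFunLike.congr_fun ih (σ x)).trans (congrArg (τ ^ k) (DFunLike.congr_fun h x))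

theorem comp_eq_conj_comp_of_ofAdd_one {m : ℕ} [NeZero m]
    {φ : Multiplicative (ZMod m) →* MulAut N} {f : N →* G} {g : Multiplicative (ZMod m) →* G}
    (h : f.comp (φ (ofAdd 1)).toMonoidHom = (MulAut.conj (g (ofAdd 1))).toMonoidHom.comp f)
    (y : Multiplicative (ZMod m)) :
    f.comp (φ y).toMonoidHom = (MulAut.conj (g y)).toMonoidHom.comp f := by
  have hy : y = ofAdd 1 ^ (toAdd y).val := by simp [← ofAdd_nsmul]
  rw [hy, map_pow, map_pow, map_pow]
  exact MulAut.comp_pow_eq_pow_comp h _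

theorem SemidirectProduct.lift_injective {φ : G →* MulAut N} {fn : N →* H} {fg : G →* H}
    (h : ∀ g, fn.comp (φ g).toMonoidHom = (MulAut.conj (fg g)).toMonoidHom.comp fn)
    (hn : Function.Injective fn) (hg : Function.Injective fg)
    (hdisj : Disjoint fn.range fg.range) : Function.Injective (lift fn fg h) := by
  refine (injective_iff_map_eq_one _).2 fun x hx => ?_
  rw [← inl_left_mul_inr_right x, map_mul, lift_inl, lift_inr, mul_eq_one_iff_eq_inv,
    ← map_inv] at hx
  have hleft : fn x.left = 1 :=
    Subgroup.disjoint_def.1 hdisj ⟨x.left, rfl⟩ (hx ▸ ⟨x.right⁻¹, rfl⟩)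
  have hright : fg x.right⁻¹ = 1 := hx ▸ hleft
  ext
  · exact (injective_iff_map_eq_one fn).1 hn _ hleft
  · simpa using (injective_iff_map_eq_one fg).1 hg _ hright

end SemidirectProduct

def ZMod.unitsMulAut (n : ℕ) : (ZMod n)ˣ ≃* MulAut (Multiplicative (ZMod n)) :=
  ((MulAutMultiplicative (ZMod n)).trans (ZMod.AddAutEquivUnits n).toMultiplicative).symm

theorem ZMod.unitsMulAut_apply_ofAdd {n : ℕ} (u : (ZMod n)ˣ) (x : ZMod n) :
    ZMod.unitsMulAut n u (ofAdd x) = ofAdd (u * x) := rfl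

section Metacyclic

variable {G : Type*} [Group G] {n m : ℕ}

def metacyclicAction (r : (ZMod n)ˣ) (hr : r ^ m = 1) :
    Multiplicative (ZMod m) →* MulAut (Multiplicative (ZMod n)) :=
  (ZMod.unitsMulAut n).toMonoidHom.comp (zmodPowersHom r hr)

theorem metacyclicAction_injective {r : (ZMod n)ˣ} (hr : r ^ m = 1) (h : orderOf r = m) :
    Function.Injective (metacyclicAction r hr) :=
  (ZMod.unitsMulAut n).injective.comp (zmodPowersHom_injective hr h)

theorem zmodPowersHom_comp_metacyclicAction [NeZero n] {r : (ZMod n)ˣ} (hr : r ^ m = 1)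
    {a b : G} (ha : a ^ n = 1) (hab : b * a * b⁻¹ = a ^ (r : ZMod n).val) :
    (zmodPowersHom a ha).comp (metacyclicAction r hr (ofAdd 1)).toMonoidHom =
      (MulAut.conj b).toMonoidHom.comp (zmodPowersHom a ha) := by
  refine MonoidHom.ext_multiplicative_zmod ?_
  simp only [metacyclicAction, MonoidHom.comp_apply, MulEquiv.coe_toMonoidHom,
    zmodPowersHom_ofAdd_one, ZMod.unitsMulAut_apply_ofAdd, mul_one, MulAut.conj_apply, hab]
  simpa using zmodPowersHom_ofAdd_natCast a ha (r : ZMod n).val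

def metacyclicLift [NeZero n] [NeZero m] {r : (ZMod n)ˣ} (hr : r ^ m = 1) {a b : G}
    (ha : a ^ n = 1) (hb : b ^ m = 1) (hab : b * a * b⁻¹ = a ^ (r : ZMod n).val) :
    Multiplicative (ZMod n) ⋊[metacyclicAction r hr] Multiplicative (ZMod m) →* G :=
  SemidirectProduct.lift (zmodPowersHom a ha) (zmodPowersHom b hb) <|
    comp_eq_conj_comp_of_ofAdd_one <| by
      rw [zmodPowersHom_ofAdd_one]
      exact zmodPowersHom_comp_metacyclicAction hr ha hab

theorem metacyclicLift_injective [NeZero n] [NeZero m] {r : (ZMod n)ˣ} (hr : r ^ m = 1)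
    {a b : G} (ha : a ^ n = 1) (hb : b ^ m = 1) (hab : b * a * b⁻¹ = a ^ (r : ZMod n).val)
    (ha' : orderOf a = n) (hb' : orderOf b = m) (hnm : n.Coprime m) :
    Function.Injective (metacyclicLift hr ha hb hab) :=
  SemidirectProduct.lift_injective _ (zmodPowersHom_injective ha ha')
    (zmodPowersHom_injective hb hb') <| Subgroup.disjoint_of_coprime_natCard <| by
      rwa [natCard_range_zmodPowersHom ha ha', natCard_range_zmodPowersHom hb hb']

end Metacyclic

theorem Matrix.SpecialLinearGroup.center_eq_bot_of_coprime {ι K : Type*} [Fintype ι]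
    [DecidableEq ι] [Nonempty ι] [Field K] [Fintype K]
    (h : (Fintype.card ι).Coprime (Fintype.card K - 1)) :
    Subgroup.center (SpecialLinearGroup ι K) = ⊥ := by
  refine (Subgroup.eq_bot_iff_forall _).2 fun A hA => ?_
  obtain ⟨r, hr, hrA⟩ := mem_center_iff.1 hA
  have hr0 : r ≠ 0 := by
    rintro rfl
    simp [zero_pow Fintype.card_ne_zero] at hr
  have hr1 : r = 1 :=
    (pow_eq_one_iff_of_coprime h).1 ⟨hr, FiniteField.pow_card_sub_one_eq_one r hr0⟩
  ext1
  simp [← hrA, hr1]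

namespace PSLThreeFive

open Matrix

/-- Multiplication by `α` on `𝔽₅(α)`, `α³ = 4α + 1`, in the basis `1, α, α²`. -/
def mulAlpha : SpecialLinearGroup (Fin 3) (ZMod 5) := ⟨!![0, 0, 1; 1, 0, 4; 0, 1, 0], by decide⟩

/-- The Frobenius `x ↦ x⁵` of `𝔽₅(α)` in the basis `1, α, α²`. -/
def frob : SpecialLinearGroup (Fin 3) (ZMod 5) := ⟨!![1, 4, 3; 0, 1, 2; 0, 1, 3], by decide⟩

set_option maxRecDepth 2000 in
theorem mulAlpha_pow_thirtyOne : mulAlpha ^ 31 = 1 := by decide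

theorem orderOf_mulAlpha : orderOf mulAlpha = 31 :=
  have : Fact (Nat.Prime 31) := ⟨by norm_num⟩
  orderOf_eq_prime mulAlpha_pow_thirtyOne (by decide)

theorem frob_pow_three : frob ^ 3 = 1 := by decide

theorem orderOf_frob : orderOf frob = 3 :=
  have : Fact (Nat.Prime 3) := ⟨by norm_num⟩
  orderOf_eq_prime frob_pow_three (by decide)

theorem frob_mul_mulAlpha_mul_frob_inv : frob * mulAlpha * frob⁻¹ = mulAlpha ^ 5 := by decide

def five : (ZMod 31)ˣ := ZMod.unitOfCoprime 5 (by norm_num)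

theorem five_pow_three : five ^ 3 = 1 := by decide

theorem orderOf_five : orderOf five = 3 :=
  have : Fact (Nat.Prime 3) := ⟨by norm_num⟩
  orderOf_eq_prime five_pow_three (by decide)

end PSLThreeFive

open PSLThreeFive in
/-- The group `PSL(3, 𝔽_5)` contains a metacyclic subgroup isomorphic to a semidirect product
`ℤ/31 ⋊ ℤ/3` with faithful action. -/
theorem psl_three_five_contains_metacyclic :
    ∃ (φ : Multiplicative (ZMod 3) →* MulAut (Multiplicative (ZMod 31)))
      (ψ : (Multiplicative (ZMod 31)) ⋊[φ] (Multiplicative (ZMod 3)) →* PSL 3 (ZMod 5)),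
      Function.Injective φ ∧ Function.Injective ψ := by
  have hcenter : Function.Injective
      (QuotientGroup.mk' (Subgroup.center (Matrix.SpecialLinearGroup (Fin 3) (ZMod 5)))) := by
    rw [← MonoidHom.ker_eq_bot_iff, QuotientGroup.ker_mk']
    exact Matrix.SpecialLinearGroup.center_eq_bot_of_coprime (by norm_num [ZMod.card])
  exact ⟨metacyclicAction five five_pow_three,
    (QuotientGroup.mk' _).comp (metacyclicLift five_pow_three mulAlpha_pow_thirtyOne
      frob_pow_three frob_mul_mulAlpha_mul_frob_inv),
    metacyclicAction_injective five_pow_three orderOf_five,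
    hcenter.comp (metacyclicLift_injective _ _ _ _ orderOf_mulAlpha orderOf_frob (by norm_num))⟩
end

section
/- The groups PSL(2, 𝔽_5) and A_5 are isomorphic, i.e. there exists a group isomorphism PSL(2, ℤ/5) ≃ A_5. -/
/-!
`PSL(2, 𝔽_5)` is simple of order 60. The monomial matrices of `SL(2, 𝔽_5)` form a quaternion
group of order 8 whose normalizer has order 24, so it has 5 conjugates, which `SL(2, 𝔽_5)`
permutes by conjugation. The centre acts trivially, so `PSL(2, 𝔽_5)` acts on these 5 points,
faithfully because it is simple. Its image then has index 2 in `S_5`, hence is `A_5`.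
-/

open Function Matrix MatrixGroups MulAction Pointwise Subgroup

theorem IsSimpleGroup.injective_of_ne_one {G H : Type*} [Group G] [Group H] [IsSimpleGroup G]
    {f : G →* H} (hf : f ≠ 1) : Injective f := by
  refine f.ker_eq_bot_iff.mp (f.normal_ker.eq_bot_or_eq_top.resolve_right fun h => hf ?_)
  ext g
  exact f.mem_ker.mp (h ▸ mem_top g)

theorem nonempty_mulEquiv_alternatingGroup_of_injective {G α : Type*} [Group G] [Fintype α]
    [DecidableEq α] {f : G →* Equiv.Perm α} (hf : Injective f)
    (hcard : 2 * Nat.card G = Nat.card (Equiv.Perm α)) :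
    Nonempty (G ≃* alternatingGroup α) := by
  have hrange : Nat.card f.range = Nat.card G :=
    Nat.card_congr (MonoidHom.ofInjective hf).toEquiv.symm
  have hpos : 0 < Nat.card G := by
    have := Nat.card_pos (α := Equiv.Perm α)
    omega
  have hindex : f.range.index = 2 := by
    have := f.range.index_mul_card
    rw [hrange, ← hcard] at this
    exact Nat.eq_of_mul_eq_mul_right hpos this
  exact ⟨(MonoidHom.ofInjective hf).trans
    (MulEquiv.subgroupCongr (Equiv.Perm.eq_alternatingGroup_of_index_eq_two hindex))⟩

section ConjOrbit

variable {G : Type*} [Group G] [DecidableEq G]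

def conjOrbitPerm (s : Finset G) : G →* Equiv.Perm (orbit (ConjAct G) s) :=
  (toPermHom (ConjAct G) (orbit (ConjAct G) s)).comp ConjAct.toConjAct.toMonoidHom

theorem center_le_ker_conjOrbitPerm (s : Finset G) : center G ≤ (conjOrbitPerm s).ker := by
  intro z hz
  rw [MonoidHom.mem_ker]
  ext ⟨t, _⟩ : 2
  have hconj : ∀ a : G, ConjAct.toConjAct z • a = a := fun a => by
    rw [ConjAct.toConjAct_smul, (mem_center_iff.mp hz a).symm, mul_inv_cancel_right]
  simp [conjOrbitPerm, Finset.smul_finset_def, hconj]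

theorem conjOrbitPerm_ne_one {s : Finset G} [Nontrivial (orbit (ConjAct G) s)] :
    conjOrbitPerm s ≠ 1 := by
  obtain ⟨⟨_, g, rfl⟩, hg⟩ := exists_ne (⟨s, mem_orbit_self s⟩ : orbit (ConjAct G) s)
  intro h
  exact hg <| DFunLike.congr_fun (DFunLike.congr_fun h (ConjAct.ofConjAct g))
    ⟨s, mem_orbit_self s⟩

end ConjOrbit

def monomialSL2 (R : Type*) [CommRing R] [Fintype R] [DecidableEq R] : Finset SL(2, R) :=
  {g | g 0 1 = 0 ∧ g 1 0 = 0 ∨ g 0 0 = 0 ∧ g 1 1 = 0}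

set_option maxRecDepth 10000 in
theorem card_SL_two_five : Nat.card SL(2, ZMod 5) = 120 := by
  rw [Nat.card_eq_fintype_card]
  decide

set_option maxRecDepth 10000 in
theorem card_center_SL_two_five : Nat.card (center SL(2, ZMod 5)) = 2 := by
  rw [Nat.card_eq_fintype_card]
  decide

theorem card_stabilizer_monomialSL2 :
    Nat.card (stabilizer (ConjAct SL(2, ZMod 5)) (monomialSL2 (ZMod 5))) = 24 := by
  rw [Nat.card_eq_fintype_card]
  decide

theorem card_orbit_monomialSL2 :
    Nat.card (orbit (ConjAct SL(2, ZMod 5)) (monomialSL2 (ZMod 5))) = 5 := by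
  have h := (stabilizer (ConjAct SL(2, ZMod 5)) (monomialSL2 (ZMod 5))).index_mul_card
  rw [index_stabilizer, ← Nat.card_coe_set_eq, card_stabilizer_monomialSL2] at h
  change _ = Nat.card SL(2, ZMod 5) at h
  rw [card_SL_two_five] at h
  omega

theorem card_PSL_two_five : Nat.card (PSL 2 (ZMod 5)) = 60 := by
  have h := card_eq_card_quotient_mul_card_subgroup (center SL(2, ZMod 5))
  rw [card_SL_two_five, card_center_SL_two_five] at h
  change 120 = Nat.card (PSL 2 (ZMod 5)) * 2 at h
  omega

/-- The groups `PSL(2, 𝔽_5)` and `A_5` are isomorphic. -/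
theorem psl_two_five_iso_alternating_five :
    Nonempty (PSL 2 (ZMod 5) ≃* alternatingGroup (Fin 5)) := by
  have : IsSimpleGroup (PSL 2 (ZMod 5)) :=
    ProjectiveSpecialLinearGroup.rank_two_simple (by simp)
  have hcard := card_orbit_monomialSL2
  have : Finite (orbit (ConjAct SL(2, ZMod 5)) (monomialSL2 (ZMod 5))) :=
    Nat.finite_of_card_ne_zero (by omega)
  have : Nontrivial (orbit (ConjAct SL(2, ZMod 5)) (monomialSL2 (ZMod 5))) :=
    Finite.one_lt_card_iff_nontrivial.mp (by omega)
  let φ := QuotientGroup.lift _ (conjOrbitPerm (monomialSL2 (ZMod 5)))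
    (center_le_ker_conjOrbitPerm _)
  have hφ : φ ≠ 1 := fun h => conjOrbitPerm_ne_one (s := monomialSL2 (ZMod 5))
    (MonoidHom.ext fun g => DFunLike.congr_fun h (g : PSL 2 (ZMod 5)))
  let e := Finite.equivFinOfCardEq hcard
  refine nonempty_mulEquiv_alternatingGroup_of_injective
    (f := e.permCongrHom.toMonoidHom.comp φ)
    (e.permCongrHom.injective.comp (IsSimpleGroup.injective_of_ne_one hφ)) ?_
  rw [card_PSL_two_five, Nat.card_perm, Nat.card_fin]
  rfl
end

section
/- The groups PSL(2, 𝔽_4) and A_5 are isomorphic, i.e. there exists a group isomorphism PSL(2, GaloisField 2 2) ≃ A_5. -/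
/-!
`PSL(2, 𝔽₄)` acts faithfully on the projective line `ℙ¹(𝔽₄)`, which has `4 + 1 = 5` points, so it
embeds into `S₅`. In characteristic `2` the only square root of unity is `1`, so the centre of
`SL(2, 𝔽₄)` is trivial and `|PSL(2, 𝔽₄)| = |SL(2, 𝔽₄)| = |GL(2, 𝔽₄)| / 3 = 60`. The image is thus
a subgroup of index `2` in `S₅`, and the only such subgroup is `A₅`.
-/

namespace Matrix.SpecialLinearGroup

variable {n R : Type*} [Fintype n] [DecidableEq n] [CommRing R]

theorem card_mul_card_units [Nonempty n] :
    Nat.card (SpecialLinearGroup n R) * Nat.card Rˣ = Nat.card (GL n R) := by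
  have hker : Nat.card (SpecialLinearGroup n R) =
      Nat.card (GeneralLinearGroup.det (n := n) (R := R)).ker := by
    rw [← SetLike.coe_sort_coe, MonoidHom.coe_ker, ← range_toGL]
    exact Nat.card_congr (Equiv.ofInjective _ toGL_injective)
  have hindex : (GeneralLinearGroup.det (n := n) (R := R)).ker.index = Nat.card Rˣ := by
    rw [Subgroup.index_ker, MonoidHom.range_eq_top.mpr GeneralLinearGroup.det_surjective,
      Subgroup.card_top]
  rw [hker, ← hindex, Subgroup.card_mul_index]

theorem card_fin_two_field {K : Type*} [Field K] [Finite K] :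
    Nat.card (SpecialLinearGroup (Fin 2) K) = Nat.card K * (Nat.card K ^ 2 - 1) := by
  have := Fintype.ofFinite K
  have h := card_mul_card_units (n := Fin 2) (R := K)
  rw [card_GL_field, Nat.card_units, Fin.prod_univ_two, Fintype.card_eq_nat_card] at h
  set q := Nat.card K
  have hq : 2 ≤ q := Finite.one_lt_card
  have hq2 : q ≤ q ^ 2 := Nat.le_self_pow two_ne_zero q
  refine Nat.eq_of_mul_eq_mul_right (by omega : 0 < q - 1) (h.trans ?_)
  simp only [Fin.val_zero, Fin.val_one, pow_zero, pow_one]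
  zify [hq2, (by omega : 1 ≤ q), (by omega : 1 ≤ q ^ 2)]
  ring

theorem center_eq_bot_of_card_eq_expChar_pow [IsReduced R] (p k : ℕ) [ExpChar R p]
    (hn : Fintype.card n = p ^ k) : Subgroup.center (SpecialLinearGroup n R) = ⊥ := by
  refine (Subgroup.eq_bot_iff_forall _).mpr fun A hA ↦ ?_
  obtain ⟨r, hr, hrA⟩ := mem_center_iff.mp hA
  rw [hn, ← mul_one (p ^ k), ExpChar.pow_prime_pow_mul_eq_one_iff, pow_one] at hr
  ext : 1
  rw [← hrA, hr, map_one, coe_one]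

end Matrix.SpecialLinearGroup

theorem Equiv.Perm.eq_alternatingGroup_of_two_mul_card_eq {α : Type*} [Fintype α] [DecidableEq α]
    {G : Subgroup (Equiv.Perm α)} (hG : 2 * Nat.card G = Nat.card (Equiv.Perm α)) :
    G = alternatingGroup α := by
  refine eq_alternatingGroup_of_index_eq_two
    (Nat.eq_of_mul_eq_mul_right (Nat.card_pos (α := G)) ?_)
  rw [G.index_mul_card, hG]

open Matrix Projectivization
open scoped LinearAlgebra.Projectivization

/-- The groups `PSL(2, 𝔽_4)` and `A_5` are isomorphic. -/
theorem psl_two_four_iso_alternating_five :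
    Nonempty (PSL 2 (GaloisField 2 2) ≃* alternatingGroup (Fin 5)) := by
  have hK : Nat.card (GaloisField 2 2) = 4 := GaloisField.card 2 2 two_ne_zero
  have hcenter : Subgroup.center (SpecialLinearGroup (Fin 2) (GaloisField 2 2)) = ⊥ :=
    SpecialLinearGroup.center_eq_bot_of_card_eq_expChar_pow 2 1 rfl
  have hPSL : Nat.card (PSL 2 (GaloisField 2 2)) = 60 := by
    rw [Nat.card_congr ((QuotientGroup.quotientMulEquivOfEq hcenter).trans
      QuotientGroup.quotientBot).toEquiv, SpecialLinearGroup.card_fin_two_field, hK]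
    rfl
  have hP : Nat.card (ℙ (GaloisField 2 2) (Fin 2 → GaloisField 2 2)) = 5 := by
    rw [card_of_finrank_two _ _ (by simp), hK]
  let φ : PSL 2 (GaloisField 2 2) →* Equiv.Perm (Fin 5) :=
    (Finite.equivFinOfCardEq hP).permCongrHom.toMonoidHom.comp PSLAction.toPermHom
  have hφ : Function.Injective φ :=
    (Finite.equivFinOfCardEq hP).permCongrHom.injective.comp
      ProjectiveSpecialLinearGroup.toPermHom_injective
  have hrange : φ.range = alternatingGroup (Fin 5) := by
    refine Equiv.Perm.eq_alternatingGroup_of_two_mul_card_eq ?_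
    rw [← Nat.card_congr (MonoidHom.ofInjective hφ).toEquiv, hPSL, Nat.card_perm, Nat.card_fin]
    rfl
  exact ⟨(MonoidHom.ofInjective hφ).trans (MulEquiv.subgroupCongr hrange)⟩
end

section
/- Every finite subgroup of the general linear group GL(2, ℤ) of invertible 2×2 integer matrices is either cyclic or isomorphic to a dihedral group DihedralGroup n for some n ≥ 1. -/
/-!
Averaging `gᵀ g` over a finite group `G ⊆ GL(2, ℝ)` gives a positive definite form `P` that
`G` preserves, so `det g = ±1` for every `g ∈ G`. Up to the scalar `√(det P)`, the matrix
`J P` (with `J` the quarter turn) squares to `-1`, and `adj g = J⁻¹ gᵀ J` shows that every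
`g` with `det g = 1` commutes with it. These elements therefore lie in a copy of `ℂ` inside
the matrix algebra and form a cyclic group `N`. The elements with `det g = -1` anticommute
with `J P`, hence have trace `0` and square to `1` by Cayley–Hamilton; so either `G = N`, or
`N` has index two and every element outside it is an involution, which makes `G` dihedral.
-/

open Matrix

namespace Matrix

section CommRing

variable {R : Type*} [CommRing R]

theorem mul_self_fin_two (M : Matrix (Fin 2) (Fin 2) R) :
    M * M = M.trace • M - M.det • (1 : Matrix (Fin 2) (Fin 2) R) := by
  ext i j
  fin_cases i <;> fin_cases j <;>
    simp only [Fin.zero_eta, Fin.mk_one, Fin.isValue, mul_apply, Fin.sum_univ_two, trace_fin_two,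
      det_fin_two, sub_apply, smul_apply, smul_eq_mul, one_apply_eq, ne_eq, zero_ne_one,
      one_ne_zero, not_false_eq_true, one_apply_ne] <;> ring

def J₂ : Matrix (Fin 2) (Fin 2) R := !![0, 1; -1, 0]

theorem det_J₂ : (J₂ : Matrix (Fin 2) (Fin 2) R).det = 1 := by
  simp [J₂, det_fin_two]

theorem J₂_mul_adjugate_transpose (M : Matrix (Fin 2) (Fin 2) R) :
    J₂ * (adjugate M)ᵀ = M * J₂ := by
  ext i j
  fin_cases i <;> fin_cases j <;> simp [J₂, adjugate_fin_two, mul_apply, Fin.sum_univ_two]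

theorem det_smul_J₂_mul_mul {P M : Matrix (Fin 2) (Fin 2) R} (h : Mᵀ * P * M = P) :
    M.det • (J₂ * P * M) = M * (J₂ * P) := by
  have hPM : M.det • (P * M) = (adjugate M)ᵀ * P := by
    calc M.det • (P * M) = (M * adjugate M)ᵀ * (P * M) := by
          rw [mul_adjugate, transpose_smul, transpose_one, smul_mul_assoc, Matrix.one_mul]
      _ = (adjugate M)ᵀ * P := by
          rw [transpose_mul, Matrix.mul_assoc, ← Matrix.mul_assoc Mᵀ, h]
  rw [Matrix.mul_assoc, ← mul_smul_comm, hPM, ← Matrix.mul_assoc, J₂_mul_adjugate_transpose,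
    Matrix.mul_assoc]

theorem J₂_mul_mul_self {P : Matrix (Fin 2) (Fin 2) R} (hP : Pᵀ = P) :
    J₂ * P * (J₂ * P) = -(P.det • (1 : Matrix (Fin 2) (Fin 2) R)) := by
  have h10 : P 1 0 = P 0 1 := by simpa using congrFun (congrFun hP 0) 1
  have htr : (J₂ * P).trace = 0 := by
    simp [J₂, trace_fin_two, vecMul, dotProduct, Fin.sum_univ_two, h10]
  rw [mul_self_fin_two, htr, det_mul, det_J₂, one_mul, zero_smul, zero_sub]

theorem det_eq_one_or_eq_neg_one_of_transpose_mul_mul_eq [IsDomain R] {n : Type*} [Fintype n]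
    [DecidableEq n] {P M : Matrix n n R} (hP : P.det ≠ 0) (h : Mᵀ * P * M = P) :
    M.det = 1 ∨ M.det = -1 := by
  have : (M.det * M.det - 1) * P.det = 0 := by
    have := congrArg det h
    rw [det_mul, det_mul, det_transpose] at this
    linear_combination this
  exact mul_self_eq_one_iff.mp (sub_eq_zero.mp ((mul_eq_zero.mp this).resolve_right hP))

end CommRing

theorem trace_eq_zero_of_mul_eq_neg_mul {K n : Type*} [Field K] [NeZero (2 : K)] [Fintype n]
    [DecidableEq n] {W M : Matrix n n K} (hW : W.det ≠ 0) (h : W * M = -(M * W)) :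
    M.trace = 0 := by
  have : M.trace = -M.trace := by
    calc M.trace = (W⁻¹ * (W * M)).trace := by
          rw [← Matrix.mul_assoc, nonsing_inv_mul _ (Ne.isUnit hW), Matrix.one_mul]
      _ = -(M * W * W⁻¹).trace := by rw [h, Matrix.mul_neg, trace_neg, trace_mul_comm]
      _ = -M.trace := by rw [Matrix.mul_assoc, mul_nonsing_inv _ (Ne.isUnit hW), Matrix.mul_one]
  have h2 : (2 : K) * M.trace = 0 := by linear_combination this
  exact (mul_eq_zero.mp h2).resolve_left two_ne_zero

theorem apply_zero_one_ne_zero_of_mul_self_eq_neg_one {R : Type*} [CommRing R] [LinearOrder R]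
    [IsStrictOrderedRing R] {I : Matrix (Fin 2) (Fin 2) R} (hI : I * I = -1) : I 0 1 ≠ 0 := by
  intro h01
  have h00 := congrFun (congrFun hI 0) 0
  simp only [mul_apply, Fin.sum_univ_two, h01, zero_mul, add_zero, neg_apply, one_apply_eq] at h00
  nlinarith [mul_self_nonneg (I 0 0)]

theorem exists_eq_smul_one_add_smul_of_commute {K : Type*} [Field K]
    {I X : Matrix (Fin 2) (Fin 2) K} (hI : I 0 1 ≠ 0) (h : Commute X I) :
    ∃ a b : K, X = a • (1 : Matrix (Fin 2) (Fin 2) K) + b • I := by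
  have h00 := congrFun (congrFun h.eq 0) 0
  have h01 := congrFun (congrFun h.eq 0) 1
  simp only [mul_apply, Fin.sum_univ_two] at h00 h01
  refine ⟨X 0 0 - X 0 1 / I 0 1 * I 0 0, X 0 1 / I 0 1, ?_⟩
  ext i j
  fin_cases i <;> fin_cases j <;>
    simp only [Fin.zero_eta, Fin.mk_one, Fin.isValue, add_apply, smul_apply, smul_eq_mul,
      one_apply_eq, one_apply_ne, ne_eq, zero_ne_one, one_ne_zero, not_false_eq_true, mul_one,
      mul_zero, zero_add, sub_add_cancel] <;> field_simp
  · linear_combination -h00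
  · linear_combination -h01

section Real

variable {P M : Matrix (Fin 2) (Fin 2) ℝ}

noncomputable def complexStructure (P : Matrix (Fin 2) (Fin 2) ℝ) : Matrix (Fin 2) (Fin 2) ℝ :=
  (√P.det)⁻¹ • (J₂ * P)

theorem complexStructure_mul_self (hPt : Pᵀ = P) (hP : 0 < P.det) :
    complexStructure P * complexStructure P = -1 := by
  rw [complexStructure, smul_mul_smul_comm, J₂_mul_mul_self hPt, ← mul_inv,
    Real.mul_self_sqrt hP.le, smul_neg, smul_smul, inv_mul_cancel₀ hP.ne', one_smul]

theorem commute_complexStructure (h : Mᵀ * P * M = P) (hdet : M.det = 1) :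
    Commute M (complexStructure P) := by
  have hJP := det_smul_J₂_mul_mul h
  rw [hdet, one_smul] at hJP
  exact (show Commute M (J₂ * P) from hJP.symm).smul_right _

theorem mul_self_eq_one_of_det_eq_neg_one (hP : P.det ≠ 0) (h : Mᵀ * P * M = P)
    (hdet : M.det = -1) : M * M = 1 := by
  have hanti : J₂ * P * M = -(M * (J₂ * P)) := by
    rw [← det_smul_J₂_mul_mul h, hdet, neg_one_smul, neg_neg]
  have htr : M.trace = 0 :=
    trace_eq_zero_of_mul_eq_neg_mul (by rwa [det_mul, det_J₂, one_mul]) hanti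
  rw [mul_self_fin_two, htr, hdet, zero_smul, zero_sub, neg_one_smul, neg_neg]

end Real

end Matrix

theorem isCyclic_of_forall_mem_range_ringHom {G R A : Type*} [Group G] [Finite G] [CommRing R]
    [IsDomain R] [Semiring A] (φ : R →+* A) (hφ : Function.Injective φ) (f : G →* A)
    (hf : Function.Injective f) (h : ∀ g, f g ∈ Set.range φ) : IsCyclic G := by
  choose z hz using h
  let F : G →* R :=
    { toFun := z
      map_one' := hφ (by rw [hz, map_one, map_one])
      map_mul' := fun g g' => hφ (by rw [hz, map_mul, map_mul, hz, hz]) }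
  refine isCyclic_of_injective_ringHom F fun g g' hgg' => hf ?_
  rw [← hz, ← hz g']
  exact congrArg φ hgg'

open DihedralGroup in
theorem Subgroup.nonempty_dihedralGroup_mulEquiv_of_index_eq_two {G : Type*} [Group G] [Finite G]
    (N : Subgroup G) [hN : IsCyclic N] (h2 : N.index = 2) (hsq : ∀ g ∉ N, g * g = 1) :
    Nonempty (DihedralGroup (Nat.card N) ≃* G) := by
  obtain ⟨s, hs⟩ : ∃ s, s ∉ N := by
    by_contra! h
    rw [(index_eq_one (H := N)).mpr (eq_top_iff' N |>.mpr h)] at h2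
    omega
  let rot : Multiplicative (ZMod (Nat.card N)) →* G := N.subtype.comp (zmodCyclicMulEquiv hN)
  have rot_mem (i) : rot i ∈ N := Subtype.prop _
  have rot_injective : Function.Injective rot := N.subtype_injective.comp (MulEquiv.injective _)
  have hs2 : s * s = 1 := hsq s hs
  have hflip (i) : s * rot i * s = (rot i)⁻¹ := by
    have hsi : s * rot i ∉ N := fun h => hs (by simpa using N.mul_mem h (N.inv_mem (rot_mem i)))
    rw [eq_inv_iff_mul_eq_one, ← hsq _ hsi]
    group
  let F : DihedralGroup (Nat.card N) → G
    | r i => rot (.ofAdd i)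
    | sr i => s * rot (.ofAdd i)
  have hF : ∀ x y, F (x * y) = F x * F y := by
    rintro (i | i) (j | j)
    · simp [F, r_mul_r]
    · calc s * rot (.ofAdd (j - i)) = s * (rot (.ofAdd i))⁻¹ * rot (.ofAdd j) := by
            rw [sub_eq_neg_add, ofAdd_add, map_mul, ofAdd_neg, map_inv, mul_assoc]
        _ = rot (.ofAdd i) * (s * rot (.ofAdd j)) := by
            rw [← hflip]; simp only [← mul_assoc, hs2, one_mul]
    · simp [F, sr_mul_r, mul_assoc]
    · calc rot (.ofAdd (j - i)) = (rot (.ofAdd i))⁻¹ * rot (.ofAdd j) := by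
            rw [sub_eq_neg_add, ofAdd_add, map_mul, ofAdd_neg, map_inv]
        _ = s * rot (.ofAdd i) * (s * rot (.ofAdd j)) := by
            rw [← hflip]; simp only [← mul_assoc]
  let Fh := MonoidHom.mk' F hF
  have hinj : Function.Injective Fh := by
    rw [injective_iff_map_eq_one]
    rintro (i | i) h
    · have : Multiplicative.ofAdd i = 1 := rot_injective (h.trans (map_one rot).symm)
      simp_all [r_zero]
    · exact (hs (eq_inv_of_mul_eq_one_left h ▸ N.inv_mem (rot_mem _))).elim
  refine ⟨MulEquiv.ofBijective Fh ((Nat.bijective_iff_injective_and_card _).mpr ⟨hinj, ?_⟩)⟩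
  rw [DihedralGroup.nat_card, ← N.card_mul_index, h2, mul_comm]

section InvariantForm

variable {G n : Type*} [Group G] [Fintype G] [Fintype n] [DecidableEq n]

def MonoidHom.invariantForm (ρ : G →* Matrix n n ℝ) : Matrix n n ℝ := ∑ g, (ρ g)ᵀ * ρ g

variable (ρ : G →* Matrix n n ℝ)

theorem MonoidHom.transpose_mul_invariantForm_mul (k : G) :
    (ρ k)ᵀ * ρ.invariantForm * ρ k = ρ.invariantForm := by
  simp only [MonoidHom.invariantForm, Matrix.mul_sum, Matrix.sum_mul]
  refine Fintype.sum_equiv (Equiv.mulRight k) _ _ fun g => ?_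
  simp only [Equiv.coe_mulRight, map_mul, transpose_mul, Matrix.mul_assoc]

theorem MonoidHom.transpose_invariantForm : ρ.invariantFormᵀ = ρ.invariantForm := by
  simp [MonoidHom.invariantForm, transpose_sum]

theorem MonoidHom.posDef_invariantForm : ρ.invariantForm.PosDef := by
  classical
  rw [MonoidHom.invariantForm, ← Finset.add_sum_erase _ _ (Finset.mem_univ 1), map_one,
    transpose_one, Matrix.one_mul]
  refine PosDef.one.add_posSemidef (posSemidef_sum _ fun g _ => ?_)
  simpa using posSemidef_conjTranspose_mul_self (ρ g)

end InvariantForm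

section FiniteSubgroups

variable {G : Type*} [Group G] [Finite G] {ρ : G →* Matrix (Fin 2) (Fin 2) ℝ}

theorem isCyclic_of_forall_det_eq_one (hρ : Function.Injective ρ) {P : Matrix (Fin 2) (Fin 2) ℝ}
    (hPt : Pᵀ = P) (hP : 0 < P.det) (hinv : ∀ g, (ρ g)ᵀ * P * ρ g = P)
    (hdet : ∀ g, (ρ g).det = 1) : IsCyclic G := by
  have hI := complexStructure_mul_self hPt hP
  let φ := (Complex.liftAux (complexStructure P) hI).toRingHom
  refine isCyclic_of_forall_mem_range_ringHom φ φ.injective ρ hρ fun g => ?_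
  obtain ⟨a, b, hab⟩ := exists_eq_smul_one_add_smul_of_commute
    (apply_zero_one_ne_zero_of_mul_self_eq_neg_one hI) (commute_complexStructure (hinv g) (hdet g))
  exact ⟨⟨a, b⟩, by simp [φ, hab, Algebra.algebraMap_eq_smul_one]⟩

theorem isCyclic_or_exists_mulEquiv_dihedralGroup_of_injective (hρ : Function.Injective ρ) :
    IsCyclic G ∨ ∃ n : ℕ, 1 ≤ n ∧ Nonempty (G ≃* DihedralGroup n) := by
  have := Fintype.ofFinite G
  have hPt := ρ.transpose_invariantForm
  have hP : 0 < ρ.invariantForm.det := ρ.posDef_invariantForm.det_pos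
  have hinv := ρ.transpose_mul_invariantForm_mul
  have hdet g : (ρ g).det = 1 ∨ (ρ g).det = -1 :=
    det_eq_one_or_eq_neg_one_of_transpose_mul_mul_eq hP.ne' (hinv g)
  by_cases hrot : ∀ g, (ρ g).det = 1
  · exact .inl (isCyclic_of_forall_det_eq_one hρ hPt hP hinv hrot)
  obtain ⟨s, hs⟩ := not_forall.mp hrot
  replace hs := (hdet s).resolve_left hs
  let N := (detMonoidHom.comp ρ).toHomUnits.ker
  have mem_N g : g ∈ N ↔ (ρ g).det = 1 := by simp [N]
  have : IsCyclic N := isCyclic_of_forall_det_eq_one (ρ := ρ.comp N.subtype)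
    (hρ.comp N.subtype_injective) hPt hP (fun g => hinv g) (fun g => (mem_N g).mp g.2)
  have h2 : N.index = 2 := Subgroup.index_eq_two_iff.mpr ⟨s, fun g => by
    rw [mem_N, mem_N, map_mul, det_mul, hs]
    rcases hdet g with h | h <;> norm_num [h]⟩
  have hsq g (hg : g ∉ N) : g * g = 1 := hρ <| by
    rw [map_mul, map_one]
    exact mul_self_eq_one_of_det_eq_neg_one hP.ne' (hinv g)
      ((hdet g).resolve_left ((mem_N g).not.mp hg))
  obtain ⟨e⟩ := N.nonempty_dihedralGroup_mulEquiv_of_index_eq_two h2 hsq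
  exact .inr ⟨_, Nat.card_pos, ⟨e.symm⟩⟩

end FiniteSubgroups

/-- Every finite subgroup of `GL(2, ℤ)` is either cyclic or isomorphic to a dihedral group
`DihedralGroup n` for some `n ≥ 1`. -/
theorem finite_subgroup_GL2Z_cyclic_or_dihedral
    (H : Subgroup (Matrix.GeneralLinearGroup (Fin 2) ℤ)) (hH : Finite H) :
    IsCyclic H ∨ ∃ n : ℕ, 1 ≤ n ∧ Nonempty (H ≃* DihedralGroup n) := by
  let ρ : H →* Matrix (Fin 2) (Fin 2) ℝ :=
    (Int.castRingHom ℝ).mapMatrix.toMonoidHom.comp ((Units.coeHom _).comp H.subtype)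
  have hρ : Function.Injective ρ :=
    (map_injective Int.cast_injective).comp (Units.val_injective.comp H.subtype_injective)
  exact isCyclic_or_exists_mulEquiv_dihedralGroup_of_injective hρ
end
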